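/- arXiv:1801.02598 — 2 statements merged into one kernel-verified Lean document; each statement's English description precedes it below -/
import Mathlib

section
/- Let X and Y be nonempty subsets of A⁺. If XY and YX are suffix codes, then X and Y are suffix codes; if XY and YX are maximal suffix codes, then X and Y are maximal suffix codes. -/
open List

/-- The (catenation) product `XY` of two languages. -/
def ProdL {A : Type*} (X Y : Set (List A)) : Set (List A) :=
  {z | ∃ x ∈ X, ∃ y ∈ Y, z = x ++ y}

/-- The product `XY` is unambiguous. -/
def Unamb {A : Type*} (X Y : Set (List A)) : Prop :=
  ∀ x₁ ∈ X, ∀ y₁ ∈ Y, ∀ x₂ ∈ X, ∀ y₂ ∈ Y,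
    x₁ ++ y₁ = x₂ ++ y₂ → x₁ = x₂ ∧ y₁ = y₂

/-- `X ⊆ A⁺` is a code: any equality of two (nonempty) factorizations over `X`
forces the factorizations to coincide. -/
def IsCode {A : Type*} (X : Set (List A)) : Prop :=
  ([] : List A) ∉ X ∧
  ∀ xs ys : List (List A), xs ≠ [] → ys ≠ [] →
    (∀ w ∈ xs, w ∈ X) → (∀ w ∈ ys, w ∈ X) → xs.flatten = ys.flatten → xs = ys

/-- `us` is an alternative factorization on `(X, Y)`: it has length at least 2,
its words lie in `X ∪ Y`, and consecutive words alternate between `X` and `Y`. -/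
def IsAltFact {A : Type*} (X Y : Set (List A)) (us : List (List A)) : Prop :=
  2 ≤ us.length ∧ (∀ w ∈ us, w ∈ X ∪ Y) ∧
  us.Chain' (fun u v => (u ∈ X → v ∈ Y) ∧ (u ∈ Y → v ∈ X))

/-- Two alternative factorizations are similar: they begin with words in the same
set (`X` or `Y`) and they end with words in the same set. -/
def SimilarFact {A : Type*} (X Y : Set (List A)) (us vs : List (List A)) : Prop :=
  (∀ u ∈ us.head?, ∀ v ∈ vs.head?, (u ∈ X ∧ v ∈ X) ∨ (u ∈ Y ∧ v ∈ Y)) ∧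
  (∀ u ∈ us.getLast?, ∀ v ∈ vs.getLast?, (u ∈ X ∧ v ∈ X) ∨ (u ∈ Y ∧ v ∈ Y))

/-- `(X, Y)` is an alternative code: `X, Y` are nonempty subsets of `A⁺` and no
word admits two different similar alternative factorizations on `(X, Y)`. -/
def IsAltCode {A : Type*} (X Y : Set (List A)) : Prop :=
  X.Nonempty ∧ Y.Nonempty ∧ ([] : List A) ∉ X ∧ ([] : List A) ∉ Y ∧
  ∀ us vs : List (List A), IsAltFact X Y us → IsAltFact X Y vs →
    SimilarFact X Y us vs → us.flatten = vs.flatten → us = vs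

/-- `Z` is an alt-induced code: `Z = XY` for some alternative code `(X, Y)`. -/
def IsAltInduced {A : Type*} (Z : Set (List A)) : Prop :=
  ∃ X Y : Set (List A), IsAltCode X Y ∧ Z = ProdL X Y

/-- `X ⊆ A⁺` is a prefix code: no word of `X` is a proper prefix of another word of `X`. -/
def IsPrefixCode {A : Type*} (X : Set (List A)) : Prop :=
  ([] : List A) ∉ X ∧ ∀ u ∈ X, ∀ v ∈ X, u <+: v → u = v

/-- `X ⊆ A⁺` is a suffix code: no word of `X` is a proper suffix of another word of `X`. -/
def IsSuffixCode {A : Type*} (X : Set (List A)) : Prop :=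
  ([] : List A) ∉ X ∧ ∀ u ∈ X, ∀ v ∈ X, u <:+ v → u = v

/-- A bifix code is both a prefix code and a suffix code. -/
def IsBifixCode {A : Type*} (X : Set (List A)) : Prop :=
  IsPrefixCode X ∧ IsSuffixCode X

/-- A maximal prefix code: a prefix code not properly contained in another prefix code. -/
def IsMaximalPrefixCode {A : Type*} (X : Set (List A)) : Prop :=
  IsPrefixCode X ∧ ∀ X' : Set (List A), IsPrefixCode X' → X ⊆ X' → X = X'

/-- A maximal suffix code: a suffix code not properly contained in another suffix code. -/
def IsMaximalSuffixCode {A : Type*} (X : Set (List A)) : Prop :=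
  IsSuffixCode X ∧ ∀ X' : Set (List A), IsSuffixCode X' → X ⊆ X' → X = X'

/-- A maximal bifix code: a bifix code not properly contained in another bifix code. -/
def IsMaximalBifixCode {A : Type*} (X : Set (List A)) : Prop :=
  IsBifixCode X ∧ ∀ X' : Set (List A), IsBifixCode X' → X ⊆ X' → X = X'

/-- `X` is thin: some word `w` is not a factor (infix) of any word of `X`. -/
def IsThin {A : Type*} (X : Set (List A)) : Prop :=
  ∃ w : List A, ∀ u v : List A, u ++ w ++ v ∉ X

/-- The left quotient `X⁻¹Y = {u | ∃ x ∈ X, xu ∈ Y}`. -/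
def lQuot {A : Type*} (X Y : Set (List A)) : Set (List A) :=
  {u | ∃ x ∈ X, x ++ u ∈ Y}

/-- The right quotient `XY⁻¹ = {u | ∃ y ∈ Y, uy ∈ X}`. -/
def rQuot {A : Type*} (X Y : Set (List A)) : Set (List A) :=
  {u | ∃ y ∈ Y, u ++ y ∈ X}

/-- `(X, Y)` is a strong alternative code: an alternative code with
`X⁻¹(XY) ⊆ Y` and `(XY)Y⁻¹ ⊆ X`. -/
def IsStrongAltCode {A : Type*} (X Y : Set (List A)) : Prop :=
  IsAltCode X Y ∧ lQuot X (ProdL X Y) ⊆ Y ∧ rQuot (ProdL X Y) Y ⊆ X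

/-- `Z` is a strong alt-induced code: `Z = XY` for some strong alternative code `(X, Y)`. -/
def IsStrongAltInduced {A : Type*} (Z : Set (List A)) : Prop :=
  ∃ X Y : Set (List A), IsStrongAltCode X Y ∧ Z = ProdL X Y

/-- `Z_a`: the set of words of `Z` beginning with the letter `a`. -/
def Za {A : Type*} (a : A) (Z : Set (List A)) : Set (List A) :=
  {w ∈ Z | w.head? = some a}

/-- A finite code `Z` is of standard form: all its words have length at least 2,
not all of its words begin with the same letter, and not all of its words end
with the same letter. -/
def StandardForm {A : Type*} (Z : Set (List A)) : Prop :=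
  (∀ w ∈ Z, 2 ≤ w.length) ∧
  ¬ (∃ a : A, ∀ w ∈ Z, w.head? = some a) ∧
  ¬ (∃ a : A, ∀ w ∈ Z, w.getLast? = some a)

lemma suffix_cancel {A : Type*} {a b c : List A} (h : a ++ c <:+ b ++ c) : a <:+ b := by
  obtain ⟨w, hw⟩ := h
  exact ⟨w, by have := hw; rw [← List.append_assoc] at this; exact List.append_cancel_right this⟩

lemma prod_suffix_code {A : Type*} {X Y : Set (List A)}
    (hX : IsSuffixCode X) (hY : IsSuffixCode Y) : IsSuffixCode (ProdL X Y) := by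
  constructor
  · rintro ⟨x, hx, y, hy, hxy⟩
    rcases List.append_eq_nil_iff.mp hxy.symm with ⟨rfl, rfl⟩
    exact hX.1 hx
  · rintro u ⟨x₁, hx₁, y₁, hy₁, rfl⟩ v ⟨x₂, hx₂, y₂, hy₂, rfl⟩ huv
    have hy1s : y₁ <:+ x₂ ++ y₂ := (List.suffix_append x₁ y₁).trans huv
    have hy2s : y₂ <:+ x₂ ++ y₂ := List.suffix_append x₂ y₂
    have : y₁ = y₂ := by
      rcases List.suffix_or_suffix_of_suffix hy1s hy2s with h | h
      · exact hY.2 y₁ hy₁ y₂ hy₂ h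
      · exact (hY.2 y₂ hy₂ y₁ hy₁ h).symm
    subst this
    have : x₁ = x₂ := hX.2 x₁ hx₁ x₂ hx₂ (suffix_cancel huv)
    rw [this]

lemma prod_sub {A : Type*} {X Y X' : Set (List A)} (hY : IsSuffixCode Y) (hXX' : X ⊆ X')
    (heq : ProdL X Y = ProdL X' Y) (hYne : Y.Nonempty) : X' ⊆ X := by
  intro u hu
  obtain ⟨y, hy⟩ := hYne
  have : u ++ y ∈ ProdL X Y := heq ▸ ⟨u, hu, y, hy, rfl⟩
  obtain ⟨x, hx, y', hy', hxy⟩ := this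
  have h1 : y <:+ x ++ y' := hxy ▸ List.suffix_append u y
  have h2 : y' <:+ x ++ y' := List.suffix_append x y'
  have : y = y' := by
    rcases List.suffix_or_suffix_of_suffix h1 h2 with h | h
    · exact hY.2 y hy y' hy' h
    · exact (hY.2 y' hy' y hy h).symm
  subst this
  have : u = x := List.append_cancel_right hxy
  exact this ▸ hx

/-- If `XY` and `YX` are suffix codes, then `X` and `Y` are suffix codes; if `XY`
and `YX` are maximal suffix codes, then `X` and `Y` are maximal suffix codes. -/
theorem stmt9 {A : Type*} [Fintype A] [Nonempty A]
    (X Y : Set (List A)) (hX : X.Nonempty) (hY : Y.Nonempty)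
    (hXe : ([] : List A) ∉ X) (hYe : ([] : List A) ∉ Y) :
    (IsSuffixCode (ProdL X Y) → IsSuffixCode (ProdL Y X) →
      IsSuffixCode X ∧ IsSuffixCode Y) ∧
    (IsMaximalSuffixCode (ProdL X Y) → IsMaximalSuffixCode (ProdL Y X) →
      IsMaximalSuffixCode X ∧ IsMaximalSuffixCode Y) := by
  
  have part1 : IsSuffixCode (ProdL X Y) → IsSuffixCode (ProdL Y X) →
      IsSuffixCode X ∧ IsSuffixCode Y := by
    intro hXY hYX
    constructor
    · refine ⟨hXe, fun u hu v hv huv => ?_⟩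
      obtain ⟨y, hy⟩ := hY
      obtain ⟨w, hw⟩ := huv
      have : u ++ y <:+ v ++ y := ⟨w, by rw [← List.append_assoc, hw]⟩
      have := hXY.2 (u ++ y) ⟨u, hu, y, hy, rfl⟩ (v ++ y) ⟨v, hv, y, hy, rfl⟩ this
      exact List.append_cancel_right this
    · refine ⟨hYe, fun u hu v hv huv => ?_⟩
      obtain ⟨x, hx⟩ := hX
      obtain ⟨w, hw⟩ := huv
      have : u ++ x <:+ v ++ x := ⟨w, by rw [← List.append_assoc, hw]⟩
      have := hYX.2 (u ++ x) ⟨u, hu, x, hx, rfl⟩ (v ++ x) ⟨v, hv, x, hx, rfl⟩ this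
      exact List.append_cancel_right this
  refine ⟨part1, fun hXY hYX => ?_⟩
  obtain ⟨hXs, hYs⟩ := part1 hXY.1 hYX.1
  constructor
  · refine ⟨hXs, fun X' hX' hsub => ?_⟩
    have hsc : IsSuffixCode (ProdL X' Y) := prod_suffix_code hX' hYs
    have hss : ProdL X Y ⊆ ProdL X' Y := by
      rintro z ⟨x, hx, y, hy, rfl⟩; exact ⟨x, hsub hx, y, hy, rfl⟩
    have heq := hXY.2 _ hsc hss
    exact Set.Subset.antisymm hsub (prod_sub hYs hsub heq hY)
  · refine ⟨hYs, fun Y' hY' hsub => ?_⟩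
    have hsc : IsSuffixCode (ProdL Y' X) := prod_suffix_code hY' hXs
    have hss : ProdL Y X ⊆ ProdL Y' X := by
      rintro z ⟨y, hy, x, hx, rfl⟩; exact ⟨y, hsub hy, x, hx, rfl⟩
    have heq := hYX.2 _ hsc hss
    exact Set.Subset.antisymm hsub (prod_sub hXs hsub heq hX)
end

section
/- Let X and Y be nonempty subsets of A⁺. Then XY and YX are both prefix codes and alt-induced codes if and only if X and Y are prefix codes; and XY and YX are both maximal prefix codes and alt-induced codes if and only if X and Y are maximal prefix codes. -/
open List

/-!
Words of a prefix code `X` can be cancelled on the left: if `x₁ s` is a prefix of `x₂ t` with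
`x₁, x₂ ∈ X`, then `x₁ = x₂` and `s` is a prefix of `t`. Reading a word from the left therefore
decodes its factors one at a time, which makes `XY` a prefix code and `(X, Y)` an alternative
code; conversely, cancelling a fixed `x ∈ X` from `XY` shows that `Y` is a prefix code. For
maximality, a prefix code is maximal iff every nonempty word is prefix-comparable with one of
its words; this completeness passes from `X` and `Y` to `XY`, and back from `YX` to `X` by
cancelling the `Y`-factor.
-/

section

variable {A : Type*} {X Y : Set (List A)}

def PrefixComplete (X : Set (List A)) : Prop :=
  ∀ w : List A, w ≠ [] → ∃ x ∈ X, x <+: w ∨ w <+: x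

lemma mem_prodL {x y : List A} (hx : x ∈ X) (hy : y ∈ Y) : x ++ y ∈ ProdL X Y :=
  ⟨x, hx, y, hy, rfl⟩

namespace IsPrefixCode

lemma eq_of_prefix_or_prefix (hX : IsPrefixCode X) {x₁ x₂ : List A} (h₁ : x₁ ∈ X)
    (h₂ : x₂ ∈ X) (h : x₁ <+: x₂ ∨ x₂ <+: x₁) : x₁ = x₂ :=
  h.elim (hX.2 x₁ h₁ x₂ h₂) fun h => (hX.2 x₂ h₂ x₁ h₁ h).symm

lemma eq_and_prefix_of_append_prefix_append (hX : IsPrefixCode X) {x₁ x₂ s t : List A}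
    (h₁ : x₁ ∈ X) (h₂ : x₂ ∈ X) (h : x₁ ++ s <+: x₂ ++ t) : x₁ = x₂ ∧ s <+: t := by
  have hx : x₁ = x₂ := hX.eq_of_prefix_or_prefix h₁ h₂ <|
    List.prefix_or_prefix_of_prefix ((List.prefix_append x₁ s).trans h) (List.prefix_append x₂ t)
  subst hx
  exact ⟨rfl, (List.prefix_append_right_inj x₁).mp h⟩

lemma eq_and_eq_of_append_eq_append (hX : IsPrefixCode X) {x₁ x₂ s t : List A}
    (h₁ : x₁ ∈ X) (h₂ : x₂ ∈ X) (h : x₁ ++ s = x₂ ++ t) : x₁ = x₂ ∧ s = t := by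
  obtain ⟨rfl, -⟩ := hX.eq_and_prefix_of_append_prefix_append h₁ h₂ (by rw [h])
  exact ⟨rfl, List.append_cancel_left h⟩

lemma nil_notMem_union (hX : IsPrefixCode X) (hY : IsPrefixCode Y) :
    ([] : List A) ∉ X ∪ Y :=
  fun h => h.elim hX.1 hY.1

lemma prodL (hX : IsPrefixCode X) (hY : IsPrefixCode Y) : IsPrefixCode (ProdL X Y) := by
  refine ⟨fun ⟨x, hx, y, _, hxy⟩ => hX.1 ?_, ?_⟩
  · rwa [(List.append_eq_nil_iff.mp hxy.symm).1] at hx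
  · rintro _ ⟨x₁, hx₁, y₁, hy₁, rfl⟩ _ ⟨x₂, hx₂, y₂, hy₂, rfl⟩ h
    obtain ⟨rfl, hy⟩ := hX.eq_and_prefix_of_append_prefix_append hx₁ hx₂ h
    rw [hY.2 y₁ hy₁ y₂ hy₂ hy]

lemma right_of_prodL (hXY : IsPrefixCode (ProdL X Y)) (hX : X.Nonempty)
    (hYe : ([] : List A) ∉ Y) : IsPrefixCode Y := by
  obtain ⟨x, hx⟩ := hX
  refine ⟨hYe, fun u hu v hv huv => List.append_cancel_left (as := x) ?_⟩
  exact hXY.2 _ (mem_prodL hx hu) _ (mem_prodL hx hv) ((List.prefix_append_right_inj x).mpr huv)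

end IsPrefixCode

lemma eq_of_flatten_eq_of_alternating (hX : IsPrefixCode X) (hY : IsPrefixCode Y) :
    ∀ {us vs : List (List A)}, (∀ w ∈ us, w ∈ X ∪ Y) → (∀ w ∈ vs, w ∈ X ∪ Y) →
      us.IsChain (fun u v => (u ∈ X → v ∈ Y) ∧ (u ∈ Y → v ∈ X)) →
      vs.IsChain (fun u v => (u ∈ X → v ∈ Y) ∧ (u ∈ Y → v ∈ X)) →
      (∀ u ∈ us.head?, ∀ v ∈ vs.head?, (u ∈ X ∧ v ∈ X) ∨ (u ∈ Y ∧ v ∈ Y)) →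
      us.flatten = vs.flatten → us = vs
  | [], [], _, _, _, _, _, _ => rfl
  | [], v :: _, _, hvs, _, _, _, h =>
    (hX.nil_notMem_union hY ((List.append_eq_nil_iff.mp h.symm).1 ▸ hvs v (.head _))).elim
  | u :: _, [], hus, _, _, _, _, h =>
    (hX.nil_notMem_union hY ((List.append_eq_nil_iff.mp h).1 ▸ hus u (.head _))).elim
  | u :: us, v :: vs, hus, hvs, hcu, hcv, hhead, h => by
    rw [List.flatten_cons, List.flatten_cons] at h
    obtain ⟨hu, hcu⟩ := List.isChain_cons.mp hcu
    obtain ⟨hv, hcv⟩ := List.isChain_cons.mp hcv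
    have ih := eq_of_flatten_eq_of_alternating hX hY (fun w hw => hus w (.tail u hw))
      (fun w hw => hvs w (.tail v hw)) hcu hcv
    rcases hhead u rfl v rfl with ⟨huX, hvX⟩ | ⟨huY, hvY⟩
    · obtain ⟨rfl, htail⟩ := hX.eq_and_eq_of_append_eq_append huX hvX h
      rw [ih (fun a ha b hb => .inr ⟨(hu a ha).1 huX, (hv b hb).1 hvX⟩) htail]
    · obtain ⟨rfl, htail⟩ := hY.eq_and_eq_of_append_eq_append huY hvY h
      rw [ih (fun a ha b hb => .inl ⟨(hu a ha).2 huY, (hv b hb).2 hvY⟩) htail]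

lemma IsPrefixCode.isAltCode (hX : IsPrefixCode X) (hY : IsPrefixCode Y)
    (hXn : X.Nonempty) (hYn : Y.Nonempty) : IsAltCode X Y :=
  ⟨hXn, hYn, hX.1, hY.1, fun _ _ hus hvs hsim h =>
    eq_of_flatten_eq_of_alternating hX hY hus.2.1 hvs.2.1 hus.2.2 hvs.2.2 hsim.1 h⟩

lemma IsPrefixCode.isAltInduced_prodL (hX : IsPrefixCode X) (hY : IsPrefixCode Y)
    (hXn : X.Nonempty) (hYn : Y.Nonempty) : IsAltInduced (ProdL X Y) :=
  ⟨X, Y, hX.isAltCode hY hXn hYn, rfl⟩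

lemma IsPrefixCode.insert (hX : IsPrefixCode X) {w : List A} (hw : w ≠ [])
    (hwX : ∀ x ∈ X, ¬x <+: w ∧ ¬w <+: x) : IsPrefixCode (insert w X) := by
  refine ⟨fun h => h.elim (fun h => hw h.symm) hX.1, ?_⟩
  rintro u (rfl | hu) v (rfl | hv) huv
  · rfl
  · exact absurd huv (hwX v hv).2
  · exact absurd huv (hwX u hu).1
  · exact hX.2 u hu v hv huv

lemma isMaximalPrefixCode_iff :
    IsMaximalPrefixCode X ↔ IsPrefixCode X ∧ PrefixComplete X := by
  refine ⟨fun h => ⟨h.1, fun w hw => ?_⟩, fun ⟨hX, hXc⟩ => ⟨hX, fun X' hX' hXX' => ?_⟩⟩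
  · by_contra! hwX
    have hw : w ∈ X := (h.2 _ (h.1.insert hw hwX) (Set.subset_insert w X)) ▸ Set.mem_insert w X
    exact (hwX w hw).1 (List.prefix_refl w)
  · refine hXX'.antisymm fun w hw => ?_
    obtain ⟨x, hx, hc⟩ := hXc w fun h => hX'.1 (h ▸ hw)
    rwa [← hX'.eq_of_prefix_or_prefix (hXX' hx) hw hc]

lemma PrefixComplete.prodL (hX : PrefixComplete X) (hY : PrefixComplete Y) (hYn : Y.Nonempty) :
    PrefixComplete (ProdL X Y) := by
  intro w hw
  obtain ⟨y, hy⟩ := hYn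
  obtain ⟨x, hx, ⟨w', rfl⟩ | hwx⟩ := hX w hw
  · rcases eq_or_ne w' [] with rfl | hw'
    · exact ⟨x ++ y, mem_prodL hx hy, .inr (by simp)⟩
    · obtain ⟨y', hy', hc⟩ := hY w' hw'
      exact ⟨x ++ y', mem_prodL hx hy', by simpa only [List.prefix_append_right_inj] using hc⟩
  · exact ⟨x ++ y, mem_prodL hx hy, .inr (hwx.trans (List.prefix_append x y))⟩

lemma PrefixComplete.right_of_prodL (hYX : PrefixComplete (ProdL Y X)) (hY : IsPrefixCode Y)
    (hYn : Y.Nonempty) : PrefixComplete X := by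
  intro w hw
  obtain ⟨y, hy⟩ := hYn
  obtain ⟨_, ⟨y', hy', x, hx, rfl⟩, hc⟩ := hYX (y ++ w) (by simp [hw])
  exact ⟨x, hx, hc.imp (fun hc => (hY.eq_and_prefix_of_append_prefix_append hy' hy hc).2)
    fun hc => (hY.eq_and_prefix_of_append_prefix_append hy hy' hc).2⟩

lemma IsMaximalPrefixCode.prodL (hX : IsMaximalPrefixCode X) (hY : IsMaximalPrefixCode Y)
    (hYn : Y.Nonempty) : IsMaximalPrefixCode (ProdL X Y) := by
  rw [isMaximalPrefixCode_iff] at hX hY ⊢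
  exact ⟨hX.1.prodL hY.1, hX.2.prodL hY.2 hYn⟩

lemma IsMaximalPrefixCode.right_of_prodL (hYX : IsMaximalPrefixCode (ProdL Y X))
    (hY : IsPrefixCode Y) (hYn : Y.Nonempty) (hXe : ([] : List A) ∉ X) :
    IsMaximalPrefixCode X := by
  rw [isMaximalPrefixCode_iff] at hYX ⊢
  exact ⟨hYX.1.right_of_prodL hYn hXe, hYX.2.right_of_prodL hY hYn⟩

end

theorem stmt11_general {A : Type*}
    (X Y : Set (List A)) (hX : X.Nonempty) (hY : Y.Nonempty)
    (hXe : ([] : List A) ∉ X) (hYe : ([] : List A) ∉ Y) :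
    ((IsPrefixCode (ProdL X Y) ∧ IsAltInduced (ProdL X Y) ∧
      IsPrefixCode (ProdL Y X) ∧ IsAltInduced (ProdL Y X)) ↔
      (IsPrefixCode X ∧ IsPrefixCode Y)) ∧
    ((IsMaximalPrefixCode (ProdL X Y) ∧ IsAltInduced (ProdL X Y) ∧
      IsMaximalPrefixCode (ProdL Y X) ∧ IsAltInduced (ProdL Y X)) ↔
      (IsMaximalPrefixCode X ∧ IsMaximalPrefixCode Y)) := by
  refine ⟨⟨fun ⟨hXY, _, hYX, _⟩ => ?_, fun ⟨hXp, hYp⟩ => ?_⟩,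
    ⟨fun ⟨hXY, _, hYX, _⟩ => ?_, fun ⟨hXm, hYm⟩ => ?_⟩⟩
  · exact ⟨hYX.right_of_prodL hY hXe, hXY.right_of_prodL hX hYe⟩
  · exact ⟨hXp.prodL hYp, hXp.isAltInduced_prodL hYp hX hY,
      hYp.prodL hXp, hYp.isAltInduced_prodL hXp hY hX⟩
  · exact ⟨hYX.right_of_prodL (hXY.1.right_of_prodL hX hYe) hY hXe,
      hXY.right_of_prodL (hYX.1.right_of_prodL hY hXe) hX hYe⟩
  · exact ⟨hXm.prodL hYm hY, hXm.1.isAltInduced_prodL hYm.1 hX hY,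
      hYm.prodL hXm hX, hYm.1.isAltInduced_prodL hXm.1 hY hX⟩

/-- `XY` and `YX` are prefix (maximal prefix) alt-induced codes if and only if
`X` and `Y` are prefix (resp. maximal prefix) codes. -/
theorem stmt11 {A : Type*} [Fintype A] [Nonempty A]
    (X Y : Set (List A)) (hX : X.Nonempty) (hY : Y.Nonempty)
    (hXe : ([] : List A) ∉ X) (hYe : ([] : List A) ∉ Y) :
    ((IsPrefixCode (ProdL X Y) ∧ IsAltInduced (ProdL X Y) ∧
      IsPrefixCode (ProdL Y X) ∧ IsAltInduced (ProdL Y X)) ↔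
      (IsPrefixCode X ∧ IsPrefixCode Y)) ∧
    ((IsMaximalPrefixCode (ProdL X Y) ∧ IsAltInduced (ProdL X Y) ∧
      IsMaximalPrefixCode (ProdL Y X) ∧ IsAltInduced (ProdL Y X)) ↔
      (IsMaximalPrefixCode X ∧ IsMaximalPrefixCode Y)) :=
  stmt11_general X Y hX hY hXe hYe
end
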